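/- arXiv:1611.07247 — 7 statements merged into one kernel-verified Lean document; each statement's English description precedes it below -/
import Mathlib

section
/- Let φ : ℝ → [0,∞] be a proper convex function with φ(1) = 0, strictly convex in a neighborhood of 1. Let P and Q be probability measures on ℝ with Q absolutely continuous with respect to P, and define D_φ(Q,P) = ∫ φ(dQ/dP) dP. Then D_φ(Q,P) = 0 if and only if P = Q. -/
open MeasureTheory Set Filter Topology
open scoped NNReal

/-! If `φ t ≤ 0` for some `t ≥ 0` other than `1`, convexity and `φ ≥ 0` make `φ` vanish on the
segment `[1, t]`, which contains points `z ≠ 1` arbitrarily close to `1`; strict convexity between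
`1` and such a `z` would push `φ` below `0` at their midpoint. So `φ (dQ/dP) = 0` `P`-a.e. forces
`dQ/dP = 1` `P`-a.e., that is `Q = P`. -/

theorem ConvexOn.eq_of_apply_nonpos_of_strictConvexOn_nhds {E : Type*} [AddCommGroup E]
    [Module ℝ E] [TopologicalSpace E] [IsTopologicalAddGroup E] [ContinuousSMul ℝ E]
    {s U : Set E} {f : E → ℝ} (hf : ConvexOn ℝ s f) (hf_nonneg : ∀ z ∈ s, 0 ≤ f z)
    {x y : E} (hx : x ∈ s) (hy : y ∈ s) (hU : U ∈ 𝓝 x) (hfU : StrictConvexOn ℝ U f)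
    (hfx : f x ≤ 0) (hfy : f y ≤ 0) : x = y := by
  by_contra hxy
  have hlim : Tendsto (AffineMap.lineMap x y) (𝓝[>] (0 : ℝ)) (𝓝 x) := by
    simpa using (AffineMap.lineMap_continuous (p := x) (q := y)).tendsto' (0 : ℝ) x (by simp)
      |>.mono_left nhdsWithin_le_nhds
  obtain ⟨t, htU, ht_pos, ht_lt⟩ :=
    ((hlim.eventually_mem hU).and (Ioo_mem_nhdsGT zero_lt_one)).exists
  set z := AffineMap.lineMap x y t
  have hz : z ∈ s := hf.1.segment_subset hx hy (lineMap_mem_segment ℝ x y ⟨ht_pos.le, ht_lt.le⟩)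
  have hfz : f z ≤ 0 :=
    (hf.le_on_segment hx hy (lineMap_mem_segment ℝ x y ⟨ht_pos.le, ht_lt.le⟩)).trans
      (max_le hfx hfy)
  have hzx : z ≠ x := by simp [z, AffineMap.lineMap_eq_left_iff, hxy, ht_pos.ne']
  have hmid := hfU.2 (mem_of_mem_nhds hU) htU hzx.symm one_half_pos one_half_pos (add_halves 1)
  have := hf_nonneg _ (hf.1 hx hz one_half_pos.le one_half_pos.le (add_halves 1))
  simp only [smul_eq_mul] at hmid
  linarith

theorem ConvexOn.measurable_comp_coe_nnreal {φ : ℝ → ℝ} (hφ : ConvexOn ℝ (Ici 0) φ) :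
    Measurable fun t : ℝ≥0 => φ t := by
  refine measurable_of_continuousOn_compl_singleton 0 ?_
  have hφ_cont : ContinuousOn φ (Ioi 0) := by
    simpa only [interior_Ici] using hφ.continuousOn_interior
  exact hφ_cont.comp NNReal.continuous_coe.continuousOn fun t ht => pos_iff_ne_zero.mpr ht

/-- For a nonnegative convex `φ` with `φ 1 = 0` that is strictly convex in a neighborhood
of `1`, the φ-divergence `D_φ(Q,P) = ∫ φ(dQ/dP) dP` between probability measures `Q ≪ P`
vanishes iff `P = Q`. -/
theorem stmt_0 (φ : ℝ → ℝ) (P Q : Measure ℝ)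
    [IsProbabilityMeasure P] [IsProbabilityMeasure Q]
    (hpos : ∀ x, 0 ≤ φ x) (hconv : ConvexOn ℝ (Ici 0) φ) (hone : φ 1 = 0)
    (hstrict : ∃ ε > 0, StrictConvexOn ℝ (Ioo (1 - ε) (1 + ε)) φ)
    (hac : Q ≪ P) :
    (∫⁻ x, ENNReal.ofReal (φ ((Q.rnDeriv P x).toReal)) ∂P) = 0 ↔ P = Q := by
  obtain ⟨ε, hε, hstrict⟩ := hstrict
  have hzero : ∀ t, 0 ≤ t → φ t ≤ 0 → t = 1 := fun t ht hφt =>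
    (hconv.eq_of_apply_nonpos_of_strictConvexOn_nhds (fun z _ => hpos z) (mem_Ici.2 zero_le_one)
      ht (Ioo_mem_nhds (by linarith) (by linarith)) hstrict hone.le hφt).symm
  have hmeas : Measurable fun x => ENNReal.ofReal (φ ((Q.rnDeriv P x).toReal)) :=
    (hconv.measurable_comp_coe_nnreal.comp (Q.measurable_rnDeriv P).ennreal_toNNReal).ennreal_ofReal
  rw [lintegral_eq_zero_iff hmeas, eq_comm, ← Measure.rnDeriv_eq_one_iff_eq hac]
  constructor
  · intro h
    filter_upwards [h, Q.rnDeriv_lt_top P] with x hx hlt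
    rw [Pi.zero_apply, ENNReal.ofReal_eq_zero] at hx
    rw [Pi.one_apply, ← ENNReal.ofReal_toReal hlt.ne, hzero _ ENNReal.toReal_nonneg hx,
      ENNReal.ofReal_one]
  · intro h
    filter_upwards [h] with x hx
    simp [hx, hone]
end

section
/- Let φ be a differentiable strictly convex function with φ(1)=0 and let φ^#(t) = t·φ'(t) − φ(t). For probability density functions p, q, r on ℝ (all mutually absolutely continuous and with the relevant integrals finite), it holds that ∫ φ'(p/r)(x) p(x) dx − ∫ φ^#(p/r)(y) q(y) dy ≤ D_φ(p,q) = ∫ φ(p(x)/q(x)) q(x) dx, with equality when r = q. -/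
open MeasureTheory

/-- `φ^#(t) = t φ'(t) − φ(t)`. -/
noncomputable def phiSharp (φ : ℝ → ℝ) (t : ℝ) : ℝ := t * deriv φ t - φ t

/-! A convex `φ` lies above its tangent line at `u`, which reads `φ'(u) v − φ^#(u) ≤ φ(v)`
(Fenchel–Young, `φ^#(u)` being the convex conjugate of `φ` at `φ'(u)`), with equality at `v = u`.
Taking `u = p/r`, `v = p/q`, multiplying by `q` and integrating gives the bound; for `r = q` the
integrands coincide. -/

theorem ConvexOn.add_deriv_mul_sub_le {S : Set ℝ} {f : ℝ → ℝ} (hf : ConvexOn ℝ S f)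
    {x y : ℝ} (hx : x ∈ S) (hy : y ∈ S) (hfd : DifferentiableAt ℝ f x) :
    f x + deriv f x * (y - x) ≤ f y := by
  rcases lt_trichotomy x y with hxy | rfl | hyx
  · have hslope := hf.deriv_le_slope hx hy hxy hfd
    rw [slope_def_field, le_div_iff₀ (sub_pos.2 hxy)] at hslope
    linarith
  · simp
  · have hslope := hf.slope_le_deriv hy hx hyx hfd
    rw [slope_def_field, div_le_iff₀ (sub_pos.2 hyx)] at hslope
    linarith

theorem deriv_mul_sub_phiSharp_le {φ : ℝ → ℝ} (hφ : ConvexOn ℝ (Set.Ioi 0) φ) {u v : ℝ}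
    (hu : 0 < u) (hv : 0 < v) (hφd : DifferentiableAt ℝ φ u) :
    deriv φ u * v - phiSharp φ u ≤ φ v := by
  have htangent := hφ.add_deriv_mul_sub_le hu hv hφd
  unfold phiSharp
  linarith

theorem deriv_mul_sub_phiSharp_mul_le {φ : ℝ → ℝ} (hφ : ConvexOn ℝ (Set.Ioi 0) φ) {u a b : ℝ}
    (hu : 0 < u) (ha : 0 < a) (hb : 0 < b) (hφd : DifferentiableAt ℝ φ u) :
    deriv φ u * a - phiSharp φ u * b ≤ φ (a / b) * b :=
  calc deriv φ u * a - phiSharp φ u * b = (deriv φ u * (a / b) - phiSharp φ u) * b := by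
        field_simp
    _ ≤ φ (a / b) * b :=
        mul_le_mul_of_nonneg_right (deriv_mul_sub_phiSharp_le hφ hu (div_pos ha hb) hφd) hb.le

theorem deriv_mul_sub_phiSharp_mul_div_self (φ : ℝ → ℝ) (a : ℝ) {b : ℝ} (hb : b ≠ 0) :
    deriv φ (a / b) * a - phiSharp φ (a / b) * b = φ (a / b) * b := by
  unfold phiSharp
  field_simp
  ring

theorem stmt_2_general (φ : ℝ → ℝ) (p q r : ℝ → ℝ)
    (hφd : ∀ t ∈ Set.Ioi (0:ℝ), DifferentiableAt ℝ φ t)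
    (hφs : StrictConvexOn ℝ (Set.Ioi 0) φ)
    (hp : ∀ x, 0 < p x) (hq : ∀ x, 0 < q x) (hr : ∀ x, 0 < r x)
    (h1 : Integrable fun x => deriv φ (p x / r x) * p x)
    (h2 : Integrable fun x => phiSharp φ (p x / r x) * q x)
    (h3 : Integrable fun x => φ (p x / q x) * q x) :
    (∫ x, deriv φ (p x / r x) * p x) - (∫ x, phiSharp φ (p x / r x) * q x)
      ≤ ∫ x, φ (p x / q x) * q x ∧
    (r = q → (∫ x, deriv φ (p x / r x) * p x) - (∫ x, phiSharp φ (p x / r x) * q x)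
      = ∫ x, φ (p x / q x) * q x) := by
  rw [← integral_sub h1 h2]
  refine ⟨integral_mono (h1.sub h2) h3 fun x => ?_, ?_⟩
  · have hu : 0 < p x / r x := div_pos (hp x) (hr x)
    exact deriv_mul_sub_phiSharp_mul_le hφs.convexOn hu (hp x) (hq x) (hφd _ hu)
  · rintro rfl
    exact integral_congr_ae (.of_forall fun x =>
      deriv_mul_sub_phiSharp_mul_div_self φ (p x) (hr x).ne')

/-- Dual lower bound for the φ-divergence between densities:
`∫ φ'(p/r) p − ∫ φ^#(p/r) q ≤ D_φ(p,q)`, with equality when `r = q`. -/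
theorem stmt_2 (φ : ℝ → ℝ) (p q r : ℝ → ℝ)
    (hφd : ∀ t ∈ Set.Ioi (0:ℝ), DifferentiableAt ℝ φ t)
    (hφs : StrictConvexOn ℝ (Set.Ioi 0) φ) (hφ1 : φ 1 = 0)
    (hp : ∀ x, 0 < p x) (hq : ∀ x, 0 < q x) (hr : ∀ x, 0 < r x)
    (hpi : ∫ x, p x = 1) (hqi : ∫ x, q x = 1) (hri : ∫ x, r x = 1)
    (h1 : Integrable fun x => deriv φ (p x / r x) * p x)
    (h2 : Integrable fun x => phiSharp φ (p x / r x) * q x)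
    (h3 : Integrable fun x => φ (p x / q x) * q x) :
    (∫ x, deriv φ (p x / r x) * p x) - (∫ x, phiSharp φ (p x / r x) * q x)
      ≤ ∫ x, φ (p x / q x) * q x ∧
    (r = q → (∫ x, deriv φ (p x / r x) * p x) - (∫ x, phiSharp φ (p x / r x) * q x)
      = ∫ x, φ (p x / q x) * q x) :=
  stmt_2_general φ p q r hφd hφs hp hq hr h1 h2 h3
end

section
/- In the EM setting, the conditional-expectation maximization step can be rewritten as a proximal step: argmax_φ Σᵢ ∫ log f(x,yᵢ|φ) hᵢ(x|φ^k) dx = argmax_φ [ Σᵢ log p_φ(yᵢ) + Σᵢ ∫ log( hᵢ(x|φ)/hᵢ(x|φ^k) ) hᵢ(x|φ^k) dx ], where hᵢ(x|φ) = f(x,yᵢ|φ)/p_φ(yᵢ) and p_φ(y) = ∫ f(x,y|φ) dx. -/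
/-!
Since `log hᵢ(·|φ) = log f(·,yᵢ|φ) - log p_φ(yᵢ)` and `hᵢ(·|φ^k)` integrates to `1`, the
proximal term `∫ log(hᵢ(x|φ)/hᵢ(x|φ^k)) hᵢ(x|φ^k) dx` equals
`∫ log f(x,yᵢ|φ) hᵢ(x|φ^k) dx - log p_φ(yᵢ) - ∫ log hᵢ(x|φ^k) hᵢ(x|φ^k) dx`.
Hence the proximal objective is the EM objective minus a quantity that does not depend on `φ`,
and two objectives differing by a constant have the same maximizers.
-/

open MeasureTheory

theorem setOf_forall_le_eq_of_eq_sub_const {α β : Type*} [AddCommGroup β] [PartialOrder β]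
    [IsOrderedAddMonoid β] (F G : α → β) (c : β) (hG : ∀ a, G a = F a - c) :
    {a | ∀ b, F b ≤ F a} = {a | ∀ b, G b ≤ G a} := by
  ext a
  simp only [Set.mem_ofPred_eq, hG, sub_le_sub_iff_right]

section IntegralLog

variable {X : Type*} [MeasurableSpace X] {μ : Measure X}

theorem integral_div_integral_self {f : X → ℝ} (hf : ∫ x, f x ∂μ ≠ 0) :
    ∫ x, f x / ∫ y, f y ∂μ ∂μ = 1 := by
  rw [integral_div, div_self hf]

theorem integral_log_div_mul {a b w : X → ℝ} (ha : ∀ x, a x ≠ 0) (hb : ∀ x, b x ≠ 0)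
    (hia : Integrable (fun x => Real.log (a x) * w x) μ)
    (hib : Integrable (fun x => Real.log (b x) * w x) μ) :
    ∫ x, Real.log (a x / b x) * w x ∂μ
      = ∫ x, Real.log (a x) * w x ∂μ - ∫ x, Real.log (b x) * w x ∂μ := by
  simp_rw [Real.log_div (ha _) (hb _), sub_mul]
  exact integral_sub hia hib

theorem integral_log_div_const_mul {a w : X → ℝ} {c : ℝ} (ha : ∀ x, a x ≠ 0) (hc : c ≠ 0)
    (hia : Integrable (fun x => Real.log (a x) * w x) μ) (hw : Integrable w μ) :
    ∫ x, Real.log (a x / c) * w x ∂μ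
      = ∫ x, Real.log (a x) * w x ∂μ - Real.log c * ∫ x, w x ∂μ := by
  rw [integral_log_div_mul (b := fun _ => c) ha (fun _ => hc) hia (hw.const_mul _),
    integral_const_mul]

theorem integral_log_div_density_mul {u v a : X → ℝ} {c : ℝ} (hu : ∀ x, u x = a x / c)
    (ha : ∀ x, a x ≠ 0) (hc : c ≠ 0) (hv : ∀ x, v x ≠ 0) (hvint : Integrable v μ)
    (hv_one : ∫ x, v x ∂μ = 1)
    (hia : Integrable (fun x => Real.log (a x) * v x) μ)
    (hiu : Integrable (fun x => Real.log (u x) * v x) μ)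
    (hiv : Integrable (fun x => Real.log (v x) * v x) μ) :
    ∫ x, Real.log (u x / v x) * v x ∂μ
      = ∫ x, Real.log (a x) * v x ∂μ - Real.log c - ∫ x, Real.log (v x) * v x ∂μ := by
  have hu0 : ∀ x, u x ≠ 0 := fun x => by rw [hu]; exact div_ne_zero (ha x) hc
  rw [integral_log_div_mul hu0 hv hiu hiv]
  simp_rw [hu]
  rw [integral_log_div_const_mul ha hc hia hvint, hv_one, mul_one]

end IntegralLog

/-- EM as a proximal step: the argmax set of
`φ ↦ Σᵢ ∫ log f(x,yᵢ|φ) hᵢ(x|φ^k) dx` coincides with the argmax set of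
`φ ↦ Σᵢ log p_φ(yᵢ) + Σᵢ ∫ log(hᵢ(x|φ)/hᵢ(x|φ^k)) hᵢ(x|φ^k) dx`, where
`hᵢ(x|φ) = f(x,yᵢ|φ)/p_φ(yᵢ)` and `p_φ(yᵢ) = ∫ f(x,yᵢ|φ) dx`. -/
theorem stmt_8 {X Φ : Type*} [MeasurableSpace X] (μ : Measure X) (n : ℕ)
    (f : Φ → Fin n → X → ℝ)
    (hfpos : ∀ φ i x, 0 < f φ i x)
    (hfint : ∀ φ i, Integrable (f φ i) μ)
    (p : Φ → Fin n → ℝ)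
    (hp : ∀ φ i, p φ i = ∫ x, f φ i x ∂μ)
    (hppos : ∀ φ i, 0 < p φ i)
    (h : Φ → Fin n → X → ℝ)
    (hh : ∀ φ i x, h φ i x = f φ i x / p φ i)
    (φk : Φ)
    (hint1 : ∀ φ i, Integrable (fun x => Real.log (f φ i x) * h φk i x) μ)
    (hint2 : ∀ φ i, Integrable (fun x => Real.log (h φ i x) * h φk i x) μ) :
    {φ0 | ∀ φ, (∑ i, ∫ x, Real.log (f φ i x) * h φk i x ∂μ)
        ≤ ∑ i, ∫ x, Real.log (f φ0 i x) * h φk i x ∂μ}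
    = {φ0 | ∀ φ,
        ((∑ i, Real.log (p φ i)) +
          ∑ i, ∫ x, Real.log (h φ i x / h φk i x) * h φk i x ∂μ)
        ≤ (∑ i, Real.log (p φ0 i)) +
          ∑ i, ∫ x, Real.log (h φ0 i x / h φk i x) * h φk i x ∂μ} := by
  have hk : ∀ i, h φk i = fun x => f φk i x / ∫ y, f φk i y ∂μ := fun i => by
    funext x; rw [hh, hp]
  have hk_int : ∀ i, Integrable (h φk i) μ := fun i => by
    rw [hk]; exact (hfint φk i).div_const _
  have hk_one : ∀ i, ∫ x, h φk i x ∂μ = 1 := fun i => by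
    rw [hk]; exact integral_div_integral_self (hp φk i ▸ (hppos φk i).ne')
  have hk_ne : ∀ i x, h φk i x ≠ 0 := fun i x => by
    rw [hh]; exact (div_pos (hfpos φk i x) (hppos φk i)).ne'
  have split : ∀ φ i, ∫ x, Real.log (h φ i x / h φk i x) * h φk i x ∂μ
      = ∫ x, Real.log (f φ i x) * h φk i x ∂μ - Real.log (p φ i)
        - ∫ x, Real.log (h φk i x) * h φk i x ∂μ := fun φ i =>
    integral_log_div_density_mul (hh φ i) (fun x => (hfpos φ i x).ne') (hppos φ i).ne'
      (hk_ne i) (hk_int i) (hk_one i) (hint1 φ i) (hint2 φ i) (hint2 φk i)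
  refine setOf_forall_le_eq_of_eq_sub_const _ _
    (∑ i, ∫ x, Real.log (h φk i x) * h φk i x ∂μ) fun φ => ?_
  simp only [split, Finset.sum_sub_distrib]
  ring
end

section
/- For a two-component Gaussian mixture p_{λ,μ₁,μ₂}(x) = λ·N(x;μ₁,1) + (1−λ)·N(x;μ₂,1) with λ ∈ (0,1), the posterior label probabilities h(x|λ,μ₁,μ₂) = λN(x;μ₁,1)/p_{λ,μ₁,μ₂}(x) satisfy: h(·|λ,μ₁,μ₂) = h(·|λ',μ₁',μ₂') pointwise on ℝ if and only if μ₁−μ₂ = μ₁'−μ₂' and log((1−λ)/λ) + μ₁²/2 − μ₂²/2 = log((1−λ')/λ') + (μ₁')²/2 − (μ₂')²/2. In particular there exist distinct parameter triplets with equal posterior probability functions. -/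
/-- Standard Gaussian density with mean `m`. -/
noncomputable def gaussPdf (x m : ℝ) : ℝ :=
  (1 / Real.sqrt (2 * Real.pi)) * Real.exp (-(x - m) ^ 2 / 2)

/-- Two-component Gaussian mixture density. -/
noncomputable def mixPdf (l m1 m2 x : ℝ) : ℝ :=
  l * gaussPdf x m1 + (1 - l) * gaussPdf x m2

/-- Posterior probability that `x` comes from the first component. -/
noncomputable def post (l m1 m2 x : ℝ) : ℝ :=
  l * gaussPdf x m1 / mixPdf l m1 m2 x

/-!
Dividing numerator and denominator of `post` by `l * gaussPdf x m1` shows that the posterior is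
the logistic sigmoid of the affine function `x ↦ (m1 - m2) * x - postIntercept l m1 m2`. Since the
sigmoid is injective, two posteriors agree iff these affine functions have the same slope and
intercept. Distinct triplets with equal posteriors exist because shifting both means changes the
intercept, and changing the weight can compensate for that.
-/

open Real Set

lemma forall_mul_sub_eq_mul_sub_iff {R : Type*} [CommRing R] {a b a' b' : R} :
    (∀ x, a * x - b = a' * x - b') ↔ a = a' ∧ b = b' := by
  refine ⟨fun h => ?_, fun ⟨ha, hb⟩ _ => by rw [ha, hb]⟩
  have h0 := h 0
  have h1 := h 1
  simp only [mul_zero, zero_sub, neg_inj, mul_one] at h0 h1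
  exact ⟨by rwa [h0, sub_left_inj] at h1, h0⟩

lemma one_sub_sigmoid_div_sigmoid (t : ℝ) : (1 - sigmoid t) / sigmoid t = exp (-t) := by
  rw [← sigmoid_neg, ← sigmoid_mul_rexp_neg, mul_div_cancel_left₀ _ (sigmoid_pos t).ne']

noncomputable def postIntercept (l m1 m2 : ℝ) : ℝ :=
  log ((1 - l) / l) + m1 ^ 2 / 2 - m2 ^ 2 / 2

lemma post_eq_sigmoid {l : ℝ} (hl : l ∈ Ioo 0 1) (m1 m2 x : ℝ) :
    post l m1 m2 x = sigmoid ((m1 - m2) * x - postIntercept l m1 m2) := by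
  obtain ⟨hl0, hl1⟩ := hl
  have hodds : exp (log ((1 - l) / l)) = (1 - l) / l := exp_log (div_pos (by linarith) hl0)
  have hratio : exp (-((m1 - m2) * x - postIntercept l m1 m2))
      = (1 - l) / l * (exp (-(x - m2) ^ 2 / 2) / exp (-(x - m1) ^ 2 / 2)) := by
    rw [← hodds, ← exp_sub, ← exp_add, postIntercept]
    ring_nf
  have hsqrt : 0 < sqrt (2 * π) := sqrt_pos.mpr (by positivity)
  rw [sigmoid_def, hratio, post, mixPdf, gaussPdf, gaussPdf]
  field_simp

theorem post_eq_post_iff {l l' : ℝ} (hl : l ∈ Ioo 0 1) (hl' : l' ∈ Ioo 0 1) (m1 m2 m1' m2' : ℝ) :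
    (∀ x, post l m1 m2 x = post l' m1' m2' x) ↔
      m1 - m2 = m1' - m2' ∧ postIntercept l m1 m2 = postIntercept l' m1' m2' := by
  simp only [post_eq_sigmoid hl, post_eq_sigmoid hl', sigmoid_inj]
  exact forall_mul_sub_eq_mul_sub_iff

/-- The posterior label probabilities of two two-component Gaussian mixtures coincide
pointwise iff the mean differences and the log-odds-plus-squared-means quantities agree;
in particular distinct parameter triplets can give equal posterior functions. -/
theorem stmt_9 :
    (∀ l m1 m2 l' m1' m2' : ℝ, l ∈ Set.Ioo (0:ℝ) 1 → l' ∈ Set.Ioo (0:ℝ) 1 →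
      ((∀ x, post l m1 m2 x = post l' m1' m2' x) ↔
        (m1 - m2 = m1' - m2' ∧
          Real.log ((1 - l) / l) + m1 ^ 2 / 2 - m2 ^ 2 / 2
            = Real.log ((1 - l') / l') + m1' ^ 2 / 2 - m2' ^ 2 / 2))) ∧
    ∃ l m1 m2 l' m1' m2' : ℝ, l ∈ Set.Ioo (0:ℝ) 1 ∧ l' ∈ Set.Ioo (0:ℝ) 1 ∧
      (l, m1, m2) ≠ (l', m1', m2') ∧ ∀ x, post l m1 m2 x = post l' m1' m2' x := by
  have sigmoid_mem (t : ℝ) : sigmoid t ∈ Ioo 0 1 := ⟨sigmoid_pos t, sigmoid_lt_one t⟩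
  refine ⟨fun l m1 m2 l' m1' m2' hl hl' => post_eq_post_iff hl hl' m1 m2 m1' m2',
    sigmoid 0, 1, 0, sigmoid (-1), 0, -1, sigmoid_mem 0, sigmoid_mem (-1), by simp, ?_⟩
  rw [post_eq_post_iff (sigmoid_mem 0) (sigmoid_mem (-1))]
  simp only [postIntercept, one_sub_sigmoid_div_sigmoid, log_exp]
  norm_num
end

section
/- Let P_T be a two-component mixture P_T = λ*P₁(·|θ*) + (1−λ*)P₀* with P₀* satisfying the linear constraints ∫g dP₀* = m(α*). If the system of equations (1/(1−λ))m* − (λ/(1−λ))m₁(θ) = m(α), where m* = ∫g dP_T and m₁(θ) = ∫g dP₁(·|θ), has the unique solution (λ*,θ*,α*), then the mixture representation is identifiable: whenever λP₁(·|θ) + (1−λ)P₀ = λ̃P₁(·|θ̃) + (1−λ̃)P̃₀ with P₀ ∈ M_α and P̃₀ ∈ M_{α̃}, one has λ=λ̃, θ=θ̃ and P₀=P̃₀. -/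
/-!
Integrating `g` against `P_T = λ P₁(·|θ) + (1 - λ) P₀` shows that every admissible representation
`(λ, θ, P₀)` with `P₀ ∈ M_α` makes `(λ, θ, α)` a solution of the moment equations, hence equal to
`(λ*, θ*, α*)`. With `λ` and `θ` fixed, `P₀` is then recovered from `P_T` by cancelling the finite
measure `λ P₁(·|θ)` and dividing by `1 - λ`.
-/

open MeasureTheory Set
open scoped ENNReal

namespace MeasureTheory.Measure

variable {X : Type*} [MeasurableSpace X]

lemma add_left_cancel_of_isFiniteMeasure {μ ν ν' : Measure X} [IsFiniteMeasure μ]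
    (h : μ + ν = μ + ν') : ν = ν' := by
  rw [← Measure.add_sub_cancel (μ := ν) (ν := μ), add_comm, h, add_comm,
    Measure.add_sub_cancel]

lemma smul_left_cancel {c : ℝ≥0∞} (h0 : c ≠ 0) (htop : c ≠ ∞) {μ ν : Measure X}
    (h : c • μ = c • ν) : μ = ν := by
  rw [← one_smul ℝ≥0∞ μ, ← one_smul ℝ≥0∞ ν, ← ENNReal.inv_mul_cancel h0 htop, mul_smul,
    mul_smul, h]

lemma ofReal_smul_add_ofReal_smul_right_cancel {μ ν ν' : Measure X} [IsFiniteMeasure μ]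
    {a b : ℝ} (hb : 0 < b)
    (h : ENNReal.ofReal a • μ + ENNReal.ofReal b • ν =
      ENNReal.ofReal a • μ + ENNReal.ofReal b • ν') :
    ν = ν' :=
  have := μ.smul_finite (ENNReal.ofReal_ne_top (r := a))
  smul_left_cancel (ENNReal.ofReal_pos.2 hb).ne' ENNReal.ofReal_ne_top
    (add_left_cancel_of_isFiniteMeasure h)

end MeasureTheory.Measure

section Mixture

variable {X E : Type*} [MeasurableSpace X] [NormedAddCommGroup E] [NormedSpace ℝ E]

lemma integral_ofReal_smul_add_ofReal_smul {f : X → E} {μ ν : Measure X}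
    (hμ : Integrable f μ) (hν : Integrable f ν) {a b : ℝ} (ha : 0 ≤ a) (hb : 0 ≤ b) :
    ∫ x, f x ∂(ENNReal.ofReal a • μ + ENNReal.ofReal b • ν) =
      a • ∫ x, f x ∂μ + b • ∫ x, f x ∂ν := by
  rw [integral_add_measure (hμ.smul_measure ENNReal.ofReal_ne_top)
      (hν.smul_measure ENNReal.ofReal_ne_top), integral_smul_measure, integral_smul_measure,
    ENNReal.toReal_ofReal ha, ENNReal.toReal_ofReal hb]

lemma one_div_one_sub_smul_sub_div_one_sub_smul {l : ℝ} (hl : l ≠ 1) (u v : E) :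
    (1 / (1 - l)) • (l • u + (1 - l) • v) - (l / (1 - l)) • u = v := by
  have : 1 - l ≠ 0 := sub_ne_zero.2 hl.symm
  match_scalars <;> field_simp; ring

lemma integral_eq_of_mixture {f : X → E} {μ ν ρ : Measure X}
    (hμ : Integrable f μ) (hν : Integrable f ν) {l : ℝ} (hl : l ∈ Ioo (0 : ℝ) 1)
    (hmix : ENNReal.ofReal l • μ + ENNReal.ofReal (1 - l) • ν = ρ) :
    (1 / (1 - l)) • (∫ x, f x ∂ρ) - (l / (1 - l)) • (∫ x, f x ∂μ) = ∫ x, f x ∂ν := by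
  rw [← hmix, integral_ofReal_smul_add_ofReal_smul hμ hν hl.1.le (sub_nonneg.2 hl.2.le)]
  exact one_div_one_sub_smul_sub_div_one_sub_smul hl.2.ne _ _

end Mixture

theorem stmt_10_general {X Θ A : Type*} [MeasurableSpace X] {L : ℕ}
    (g : X → Fin L → ℝ) (m : A → Fin L → ℝ)
    (P1 : Θ → Measure X) [∀ θ, IsProbabilityMeasure (P1 θ)]
    (PT : Measure X)
    (hgθ : ∀ θ, Integrable g (P1 θ))
    (lstar : ℝ) (θstar : Θ) (αstar : A)
    (huniq : ∀ (l : ℝ) (θ : Θ) (α : A), l ∈ Ioo (0:ℝ) 1 →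
      (1 / (1 - l)) • (∫ x, g x ∂PT) - (l / (1 - l)) • (∫ x, g x ∂(P1 θ)) = m α →
      l = lstar ∧ θ = θstar ∧ α = αstar) :
    ∀ (l l' : ℝ) (θ θ' : Θ) (α α' : A) (P0 P0' : Measure X),
      IsProbabilityMeasure P0 → IsProbabilityMeasure P0' →
      Integrable g P0 → Integrable g P0' →
      l ∈ Ioo (0:ℝ) 1 → l' ∈ Ioo (0:ℝ) 1 →
      (∫ x, g x ∂P0) = m α → (∫ x, g x ∂P0') = m α' →
      ENNReal.ofReal l • P1 θ + ENNReal.ofReal (1 - l) • P0 = PT →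
      ENNReal.ofReal l' • P1 θ' + ENNReal.ofReal (1 - l') • P0' = PT →
      l = l' ∧ θ = θ' ∧ P0 = P0' := by
  intro l l' θ θ' α α' P0 P0' _ _ hgP0 hgP0' hl hl' hcon hcon' hmix hmix'
  obtain ⟨rfl, rfl, -⟩ :=
    huniq l θ α hl ((integral_eq_of_mixture (hgθ θ) hgP0 hl hmix).trans hcon)
  obtain ⟨rfl, rfl, -⟩ :=
    huniq l' θ' α' hl' ((integral_eq_of_mixture (hgθ θ') hgP0' hl' hmix').trans hcon')
  exact ⟨rfl, rfl, Measure.ofReal_smul_add_ofReal_smul_right_cancel (sub_pos.2 hl.2)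
    (hmix.trans hmix'.symm)⟩

/-- Identifiability of the semiparametric two-component mixture with moment-type linear
constraints on the unknown component: if the associated system of moment equations has the
unique solution `(λ*,θ*,α*)`, then two representations of the mixture `P_T` with constrained
unknown components must coincide. -/
theorem stmt_10 {X Θ A : Type*} [MeasurableSpace X] {L : ℕ}
    (g : X → Fin L → ℝ) (m : A → Fin L → ℝ)
    (P1 : Θ → Measure X) [∀ θ, IsProbabilityMeasure (P1 θ)]
    (PT : Measure X) [IsProbabilityMeasure PT]
    (hgθ : ∀ θ, Integrable g (P1 θ)) (hgT : Integrable g PT)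
    (lstar : ℝ) (θstar : Θ) (αstar : A) (P0star : Measure X)
    [IsProbabilityMeasure P0star]
    (hlstar : lstar ∈ Ioo (0:ℝ) 1)
    (hmixstar :
      PT = ENNReal.ofReal lstar • P1 θstar + ENNReal.ofReal (1 - lstar) • P0star)
    (hconstar : (∫ x, g x ∂P0star) = m αstar)
    (huniq : ∀ (l : ℝ) (θ : Θ) (α : A), l ∈ Ioo (0:ℝ) 1 →
      (1 / (1 - l)) • (∫ x, g x ∂PT) - (l / (1 - l)) • (∫ x, g x ∂(P1 θ)) = m α →
      l = lstar ∧ θ = θstar ∧ α = αstar) :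
    ∀ (l l' : ℝ) (θ θ' : Θ) (α α' : A) (P0 P0' : Measure X),
      IsProbabilityMeasure P0 → IsProbabilityMeasure P0' →
      Integrable g P0 → Integrable g P0' →
      l ∈ Ioo (0:ℝ) 1 → l' ∈ Ioo (0:ℝ) 1 →
      (∫ x, g x ∂P0) = m α → (∫ x, g x ∂P0') = m α' →
      ENNReal.ofReal l • P1 θ + ENNReal.ofReal (1 - l) • P0 = PT →
      ENNReal.ofReal l' • P1 θ' + ENNReal.ofReal (1 - l') • P0' = PT →
      l = l' ∧ θ = θ' ∧ P0 = P0' :=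
  stmt_10_general g m P1 PT hgθ lstar θstar αstar huniq
end

section
/- The r-th L-moment λ_r = (1/r) Σ_{k=0}^{r−1} (−1)^k C(r−1,k) E[X_{r−k:r}] of a distribution with continuous cdf F and finite mean satisfies λ_r = ∫₀¹ F^{-1}(u) L_{r−1}(u) du, where L_r(u) = Σ_{k=0}^r (−1)^{r−k} C(r,k) C(r+k,k) u^k is the shifted Legendre polynomial of order r and F^{-1} is the quantile function. -/
open MeasureTheory Set

/-- The shifted Legendre polynomial `L_r(u) = Σ_{k=0}^r (−1)^{r−k} C(r,k) C(r+k,k) u^k`. -/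
noncomputable def shiftedLegendre (r : ℕ) (u : ℝ) : ℝ :=
  ∑ k ∈ Finset.range (r + 1),
    (-1 : ℝ) ^ (r - k) * (r.choose k) * ((r + k).choose k) * u ^ k

/-!
Expanding `(1 - u)^k` binomially and summing the coefficients with Vandermonde's identity gives
`L_n(u) = Σ_k (-1)^k C(n,k)^2 u^(n-k) (1-u)^k`, and `r C(r-1,k)^2 = r!/((r-k-1)! k!) C(r-1,k)`,
so the L-moment is `∫ x L_{r-1}(F x) dμ`. On `(0,1)` the quantile function satisfies
`F⁻¹ u ≤ x ↔ u ≤ F x` (right continuity of `F`), so it pushes Lebesgue measure on `(0,1)`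
forward to `μ`; substituting `x = F⁻¹(u)` and using `F (F⁻¹ u) = u` for continuous `F` gives
the claim.
-/

section Binomial

open Finset

theorem sum_Ico_choose_sq_mul_choose {n t : ℕ} (ht : t ≤ n) :
    ∑ k ∈ Ico t (n + 1), n.choose k ^ 2 * k.choose t
      = n.choose t * (2 * n - t).choose (n - t) := by
  calc ∑ k ∈ Ico t (n + 1), n.choose k ^ 2 * k.choose t
      = ∑ k ∈ Ico t (n + 1), n.choose t * (n.choose k * (n - t).choose (k - t)) :=
        sum_congr rfl fun k hk => by
          rw [sq, mul_assoc, Nat.choose_mul (mem_Ico.1 hk).1]; ring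
    _ = n.choose t * ∑ s ∈ range (n - t + 1), (n - t).choose s * n.choose (n - t - s) := by
        rw [← mul_sum, sum_Ico_eq_sum_range]
        refine congrArg _ (sum_congr (by congr 1; omega) fun s hs => ?_)
        rw [Finset.mem_range] at hs
        rw [Nat.add_sub_cancel_left, mul_comm, ← Nat.choose_symm (by omega : t + s ≤ n)]
        congr 2; omega
    _ = n.choose t * (2 * n - t).choose (n - t) := by
        rw [show 2 * n - t = (n - t) + n by omega, Nat.add_choose_eq,
          Nat.sum_antidiagonal_eq_sum_range_succ fun i j => (n - t).choose i * n.choose j]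

theorem neg_one_pow_mul_pow_mul_one_sub_pow {n k : ℕ} (hk : k ≤ n) (u : ℝ) :
    (-1) ^ k * (u ^ (n - k) * (1 - u) ^ k)
      = ∑ t ∈ range (k + 1), (-1) ^ t * k.choose t * u ^ (n - t) := by
  rw [sub_eq_add_neg, add_pow, mul_sum, mul_sum]
  refine sum_congr rfl fun t ht => ?_
  obtain ⟨a, rfl⟩ := Nat.exists_eq_add_of_le (mem_range_succ_iff.1 ht)
  obtain ⟨b, rfl⟩ := Nat.exists_eq_add_of_le hk
  rw [Nat.add_sub_cancel_left, Nat.add_sub_cancel_left, Nat.add_assoc, Nat.add_sub_cancel_left,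
    neg_pow]
  ring_nf
  rw [pow_mul', neg_one_sq, one_pow, mul_one]

theorem shiftedLegendre_eq_sum_choose_sq (n : ℕ) (u : ℝ) :
    shiftedLegendre n u
      = ∑ k ∈ range (n + 1), (-1) ^ k * (n.choose k : ℝ) ^ 2 *
          (u ^ (n - k) * (1 - u) ^ k) := by
  symm
  calc ∑ k ∈ range (n + 1), (-1) ^ k * (n.choose k : ℝ) ^ 2 * (u ^ (n - k) * (1 - u) ^ k)
      = ∑ k ∈ range (n + 1), ∑ t ∈ range (k + 1),
          (-1) ^ t * ((n.choose k : ℝ) ^ 2 * k.choose t) * u ^ (n - t) :=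
        sum_congr rfl fun k hk => by
          rw [mul_comm _ ((n.choose k : ℝ) ^ 2), mul_assoc,
            neg_one_pow_mul_pow_mul_one_sub_pow (mem_range_succ_iff.1 hk), mul_sum]
          exact sum_congr rfl fun t _ => by ring
    _ = ∑ t ∈ range (n + 1), (-1) ^ t *
          (∑ k ∈ Ico t (n + 1), (n.choose k : ℝ) ^ 2 * k.choose t) * u ^ (n - t) := by
        simp only [range_eq_Ico, sum_mul, mul_sum]
        exact (sum_Ico_Ico_comm 0 (n + 1) _).symm
    _ = ∑ t ∈ range (n + 1), (-1) ^ t *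
          ((n.choose t : ℝ) * (2 * n - t).choose (n - t)) * u ^ (n - t) :=
        sum_congr rfl fun t ht => by
          rw [← Nat.cast_mul, ← sum_Ico_choose_sq_mul_choose (mem_range_succ_iff.1 ht)]
          push_cast; rfl
    _ = shiftedLegendre n u := by
        rw [shiftedLegendre, ← sum_range_reflect]
        refine sum_congr rfl fun j hj => ?_
        have hj : j ≤ n := mem_range_succ_iff.1 hj
        rw [Nat.add_sub_cancel, Nat.choose_symm hj, Nat.sub_sub_self hj,
          show 2 * n - (n - j) = n + j by omega]
        ring

end Binomial

theorem factorial_succ_div_factorial_mul_factorial {n k : ℕ} (hk : k ≤ n) :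
    ((n + 1).factorial : ℝ) / ((n - k).factorial * k.factorial) = (n + 1) * n.choose k := by
  rw [Nat.cast_choose ℝ hk, Nat.factorial_succ]
  push_cast
  ring

@[fun_prop]
theorem continuous_shiftedLegendre (n : ℕ) : Continuous (shiftedLegendre n) := by
  unfold shiftedLegendre
  fun_prop

open ProbabilityTheory Filter Topology

noncomputable def quantile (F : ℝ → ℝ) (u : ℝ) : ℝ := sInf {x | u ≤ F x}

section Quantile

variable (μ : Measure ℝ)

theorem quantile_cdf_le_iff {u : ℝ} (hu : u ∈ Ioo 0 1) (x : ℝ) :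
    quantile (cdf μ) u ≤ x ↔ u ≤ cdf μ x := by
  set S := {x | u ≤ cdf μ x}
  have hne : S.Nonempty := ((tendsto_cdf_atTop μ).eventually (eventually_ge_nhds hu.2)).exists
  have hbdd : BddBelow S := by
    obtain ⟨z, hz⟩ :=
      eventually_atBot.1 ((tendsto_cdf_atBot μ).eventually (eventually_lt_nhds hu.1))
    exact ⟨z, fun y hy => le_of_not_gt fun hyz => (hz y hyz.le).not_ge hy⟩
  -- right continuity of the cdf puts the infimum of `S` into `S`
  have hmem : sInf S ∈ S := by
    refine ge_of_tendsto (((cdf μ).right_continuous _).mono Ioi_subset_Ici_self) ?_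
    filter_upwards [self_mem_nhdsWithin] with y hy
    obtain ⟨z, hzS, hzy⟩ := exists_lt_of_csInf_lt hne hy
    exact hzS.trans (monotone_cdf μ hzy.le)
  exact ⟨fun h => hmem.trans (monotone_cdf μ h), fun h => csInf_le hbdd h⟩

theorem monotoneOn_quantile_cdf : MonotoneOn (quantile (cdf μ)) (Ioo 0 1) :=
  fun _ hu _ hv huv => (quantile_cdf_le_iff μ hu _).2 <|
    huv.trans ((quantile_cdf_le_iff μ hv _).1 le_rfl)

theorem aemeasurable_quantile_cdf :
    AEMeasurable (quantile (cdf μ)) (volume.restrict (Ioo 0 1)) :=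
  aemeasurable_restrict_of_monotoneOn measurableSet_Ioo (monotoneOn_quantile_cdf μ)

theorem volume_Iic_inter_Ioo_zero_one {c : ℝ} (hc : c ≤ 1) :
    volume (Iic c ∩ Ioo 0 1) = ENNReal.ofReal c := by
  refine le_antisymm ?_ ?_
  · calc volume (Iic c ∩ Ioo 0 1) ≤ volume (Ioc 0 c) :=
          measure_mono fun u hu => ⟨hu.2.1, hu.1⟩
      _ = ENNReal.ofReal c := by rw [Real.volume_Ioc, sub_zero]
  · calc ENNReal.ofReal c = volume (Ioo 0 c) := by rw [Real.volume_Ioo, sub_zero]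
      _ ≤ volume (Iic c ∩ Ioo 0 1) :=
          measure_mono fun u hu => ⟨hu.2.le, hu.1, hu.2.trans_le hc⟩

theorem map_quantile_cdf [IsProbabilityMeasure μ] :
    (volume.restrict (Ioo 0 1)).map (quantile (cdf μ)) = μ := by
  refine (Measure.ext_of_Iic μ _ fun a => ?_).symm
  rw [Measure.map_apply_of_aemeasurable (aemeasurable_quantile_cdf μ) measurableSet_Iic,
    Measure.restrict_apply' measurableSet_Ioo]
  have hpre : quantile (cdf μ) ⁻¹' Iic a ∩ Ioo 0 1 = Iic (cdf μ a) ∩ Ioo 0 1 := by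
    ext u
    simp only [mem_inter_iff, mem_preimage, mem_Iic]
    exact and_congr_left (quantile_cdf_le_iff μ · a)
  rw [hpre, volume_Iic_inter_Ioo_zero_one (cdf_le_one μ a), ofReal_cdf]

theorem integral_comp_quantile_cdf [IsProbabilityMeasure μ] {E : Type*} [NormedAddCommGroup E]
    [NormedSpace ℝ E] {f : ℝ → E} (hf : AEStronglyMeasurable f μ) :
    ∫ u in Ioo 0 1, f (quantile (cdf μ) u) = ∫ x, f x ∂μ := by
  rw [← integral_map (aemeasurable_quantile_cdf μ) (by rwa [map_quantile_cdf]),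
    map_quantile_cdf]

theorem cdf_quantile_cdf (hc : Continuous (cdf μ)) {u : ℝ} (hu : u ∈ Ioo 0 1) :
    cdf μ (quantile (cdf μ) u) = u := by
  refine le_antisymm ?_ ((quantile_cdf_le_iff μ hu _).1 le_rfl)
  have hlt : Iio (quantile (cdf μ) u) ⊆ {x | cdf μ x ≤ u} := fun x hx =>
    le_of_lt (not_le.1 fun h => hx.not_ge ((quantile_cdf_le_iff μ hu x).2 h))
  exact (isClosed_le hc continuous_const).closure_subset_iff.2 hlt (by simp)

theorem integrable_mul_cdf_pow_mul_one_sub_cdf_pow (hμ : Integrable id μ) (i j : ℕ) :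
    Integrable (fun x => x * cdf μ x ^ i * (1 - cdf μ x) ^ j) μ := by
  have hcdf : Measurable (cdf μ) := (monotone_cdf μ).measurable
  simp only [mul_assoc]
  refine hμ.mul_bdd (c := 1) (by fun_prop) (ae_of_all _ fun x => ?_)
  have h0 := cdf_nonneg μ x
  have h1 := cdf_le_one μ x
  rw [norm_mul, norm_pow, norm_pow, Real.norm_of_nonneg h0, Real.norm_of_nonneg (by linarith)]
  exact mul_le_one₀ (pow_le_one₀ h0 h1) (by positivity)
    (pow_le_one₀ (by linarith) (by linarith))

end Quantile

/-- The r-th L-moment `(1/r) Σ_{k=0}^{r−1} (−1)^k C(r−1,k) E[X_{r−k:r}]` of a distribution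
with continuous cdf `F` and finite mean equals `∫₀¹ F⁻¹(u) L_{r−1}(u) du`, where
`E[X_{j:r}] = (r!/((j−1)!(r−j)!)) ∫ x F(x)^{j−1}(1−F(x))^{r−j} dF(x)`. -/
theorem stmt_14 (μ : Measure ℝ) [IsProbabilityMeasure μ]
    (F : ℝ → ℝ) (hF : ∀ x, F x = (μ (Iic x)).toReal)
    (hFcont : Continuous F)
    (hmean : Integrable (fun x => |x|) μ)
    (Finv : ℝ → ℝ) (hFinv : ∀ u, Finv u = sInf {x | u ≤ F x})
    (r : ℕ) (hr : 1 ≤ r) :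
    (1 / r : ℝ) * ∑ k ∈ Finset.range r, (-1 : ℝ) ^ k * ((r - 1).choose k) *
        (((r.factorial : ℝ) / ((r - k - 1).factorial * k.factorial)) *
          ∫ x, x * F x ^ (r - k - 1) * (1 - F x) ^ k ∂μ)
      = ∫ u in Ioo (0:ℝ) 1, Finv u * shiftedLegendre (r - 1) u := by
  obtain ⟨n, rfl⟩ := Nat.exists_eq_add_of_le' hr
  obtain rfl : F = cdf μ := funext fun x => (hF x).trans (cdf_eq_real μ x).symm
  obtain rfl : Finv = quantile (cdf μ) := funext hFinv
  have hint := integrable_mul_cdf_pow_mul_one_sub_cdf_pow μ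
    ((integrable_norm_iff measurable_id.aestronglyMeasurable).1 hmean)
  calc _ = ∑ k ∈ Finset.range (n + 1), ∫ x, (-1) ^ k * (n.choose k : ℝ) ^ 2 *
          (x * cdf μ x ^ (n - k) * (1 - cdf μ x) ^ k) ∂μ := by
        rw [Finset.mul_sum]
        refine Finset.sum_congr rfl fun k hk => ?_
        have hkn : k ≤ n := Finset.mem_range_succ_iff.1 hk
        rw [integral_const_mul, Nat.add_sub_cancel, show n + 1 - k - 1 = n - k by omega,
          factorial_succ_div_factorial_mul_factorial hkn]
        field_simp
        push_cast
        ring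
    _ = ∫ x, x * shiftedLegendre n (cdf μ x) ∂μ := by
        rw [← integral_finsetSum _ fun k _ => (hint _ _).const_mul _]
        simp_rw [shiftedLegendre_eq_sum_choose_sq, Finset.mul_sum]
        exact integral_congr_ae (ae_of_all _ fun x => Finset.sum_congr rfl fun k _ => by ring)
    _ = ∫ u in Ioo 0 1, quantile (cdf μ) u * shiftedLegendre n u := by
        rw [← integral_comp_quantile_cdf μ (by fun_prop)]
        exact setIntegral_congr_fun measurableSet_Ioo fun u hu => by
          rw [cdf_quantile_cdf μ hFcont hu]
end

section
/- Suppose H_n, H : Φ × Ξ → ℝ satisfy: (i) sup_{φ,ξ}|H_n(φ,ξ) − H(φ,ξ)| → 0 in probability; (ii) for each φ, the supremum of ξ ↦ H(φ,ξ) is attained at a unique, well-separated ξ(φ) (for every ε>0 there is η>0 with H(φ,ξ(φ)) − H(φ,ξ̃) > η whenever ‖ξ̃ − ξ(φ)‖ > ε, uniformly in φ); (iii) the infimum of φ ↦ H(φ,ξ(φ)) at φ* is unique and well separated; (iv) ξ ↦ H(φ,ξ) is continuous. Then any φ̂_n ∈ arginf_φ sup_ξ H_n(φ,ξ) converges to φ*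 in probability. -/
open MeasureTheory Filter

/-!
Let `η` be the separation margin of `φstar` at radius `ε / 2`. Whenever `Hn n ω` is uniformly
within `η / 2` of `H`, so are the maximal values `φ ↦ Hn n ω φ (ξn n ω φ)` and
`φ ↦ H φ (ξsel φ)`; a minimiser of the former is then an `η`-near-minimiser of the latter and
hence lies within `ε / 2` of `φstar`. So `{ε ≤ dist (φhat n ω) φstar}` is contained in the event
of a uniform deviation `≥ η / 2`, whose probability tends to zero.
-/

theorem abs_sub_lt_of_forall_le_of_forall_abs_sub_lt {Ξ : Type*} {F G : Ξ → ℝ} {a b : Ξ}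
    {δ : ℝ} (hclose : ∀ ξ, |F ξ - G ξ| < δ) (hFa : ∀ ξ, F ξ ≤ F a) (hGb : ∀ ξ, G ξ ≤ G b) :
    |F a - G b| < δ := by
  have hb := abs_lt.1 (hclose b)
  have ha := abs_lt.1 (hclose a)
  have := hFa b
  have := hGb a
  exact abs_lt.2 ⟨by linarith, by linarith⟩

theorem dist_le_of_isMin_of_forall_abs_sub_lt {Φ : Type*} [PseudoMetricSpace Φ] {v w : Φ → ℝ}
    {x x₀ : Φ} {ε η : ℝ} (hclose : ∀ φ, |w φ - v φ| < η / 2) (hmin : ∀ φ, w x ≤ w φ)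
    (hsep : ∀ φ, ε < dist φ x₀ → v x₀ + η < v φ) :
    dist x x₀ ≤ ε := by
  by_contra! hfar
  have hx := abs_lt.1 (hclose x)
  have hx₀ := abs_lt.1 (hclose x₀)
  linarith [hsep x hfar, hmin x₀]

theorem stmt_18_general {Ω : Type*} [MeasurableSpace Ω] (P : Measure Ω)
    {Φ Ξ : Type*} [MetricSpace Φ]
    (Hn : ℕ → Ω → Φ → Ξ → ℝ) (H : Φ → Ξ → ℝ)
    (hunif : ∀ ε > 0,
      Tendsto (fun n => P {ω | ∃ φ ξ, ε ≤ |Hn n ω φ ξ - H φ ξ|}) atTop (nhds 0))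
    (ξsel : Φ → Ξ)
    (hsup : ∀ φ ξ, H φ ξ ≤ H φ (ξsel φ))
    (φstar : Φ)
    (hsep2 : ∀ ε > 0, ∃ η > 0, ∀ φ, ε < dist φ φstar →
      H φstar (ξsel φstar) + η < H φ (ξsel φ))
    (ξn : ℕ → Ω → Φ → Ξ)
    (hξn : ∀ n ω φ ξ, Hn n ω φ ξ ≤ Hn n ω φ (ξn n ω φ))
    (φhat : ℕ → Ω → Φ)
    (hφhat : ∀ n ω φ, Hn n ω (φhat n ω) (ξn n ω (φhat n ω)) ≤ Hn n ω φ (ξn n ω φ)) :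
    ∀ ε > 0, Tendsto (fun n => P {ω | ε ≤ dist (φhat n ω) φstar}) atTop (nhds 0) := by
  intro ε hε
  obtain ⟨η, hη, hsepη⟩ := hsep2 (ε / 2) (half_pos hε)
  refine tendsto_of_tendsto_of_tendsto_of_le_of_le tendsto_const_nhds (hunif (η / 2) (half_pos hη))
    (fun _ => zero_le) fun n => measure_mono fun ω hfar => ?_
  by_contra hclose
  simp only [Set.mem_ofPred_eq, not_exists, not_le] at hfar hclose
  have hvalues : ∀ φ, |Hn n ω φ (ξn n ω φ) - H φ (ξsel φ)| < η / 2 := fun φ =>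
    abs_sub_lt_of_forall_le_of_forall_abs_sub_lt (hclose φ) (hξn n ω φ) (hsup φ)
  have hnear := dist_le_of_isMin_of_forall_abs_sub_lt hvalues (hφhat n ω) hsepη
  linarith

/-- Consistency of the double-optimization (min-sup) M-estimator: under uniform convergence
in probability of `H_n` to `H`, unique well-separated inner suprema `ξ(φ)` (uniformly in
`φ`), a unique well-separated outer infimum `φ*`, and continuity of `H(φ,·)`, any
`φ̂_n ∈ arginf_φ sup_ξ H_n(φ,ξ)` converges to `φ*` in probability. -/
theorem stmt_18 {Ω : Type*} [MeasurableSpace Ω] (P : Measure Ω) [IsProbabilityMeasure P]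
    {Φ Ξ : Type*} [MetricSpace Φ] [MetricSpace Ξ]
    (Hn : ℕ → Ω → Φ → Ξ → ℝ) (H : Φ → Ξ → ℝ)
    (hunif : ∀ ε > 0,
      Tendsto (fun n => P {ω | ∃ φ ξ, ε ≤ |Hn n ω φ ξ - H φ ξ|}) atTop (nhds 0))
    (ξsel : Φ → Ξ)
    (hsup : ∀ φ ξ, H φ ξ ≤ H φ (ξsel φ))
    (hsep : ∀ ε > 0, ∃ η > 0, ∀ φ ξ, ε < dist ξ (ξsel φ) → H φ ξ + η < H φ (ξsel φ))
    (φstar : Φ)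
    (hinf : ∀ φ, H φstar (ξsel φstar) ≤ H φ (ξsel φ))
    (hsep2 : ∀ ε > 0, ∃ η > 0, ∀ φ, ε < dist φ φstar →
      H φstar (ξsel φstar) + η < H φ (ξsel φ))
    (hcont : ∀ φ, Continuous (H φ))
    (ξn : ℕ → Ω → Φ → Ξ)
    (hξn : ∀ n ω φ ξ, Hn n ω φ ξ ≤ Hn n ω φ (ξn n ω φ))
    (φhat : ℕ → Ω → Φ)
    (hφhat : ∀ n ω φ, Hn n ω (φhat n ω) (ξn n ω (φhat n ω)) ≤ Hn n ω φ (ξn n ω φ)) :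
    ∀ ε > 0, Tendsto (fun n => P {ω | ε ≤ dist (φhat n ω) φstar}) atTop (nhds 0) :=
  stmt_18_general P Hn H hunif ξsel hsup φstar hsep2 ξn hξn φhat hφhat
end
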